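/- Let $(X,d,\mu)$ be a metric-measure space satisfying: there exist $1 \le p < q < \infty$, $C_P \ge 1$, $\sigma \ge 1$ such that the $(q,p)$-Poincaré inequality $(\fint_B |u-u_B|^q d\mu)^{1/q} \le C_P r (\fint_{\sigma B} g^p d\mu)^{1/p}$ holds for all balls $B$ of radius $r$, all $u \in L^1_{loc}$, and all upper gradients $g$ of $u$. Fix a ball $B = B(x,r)$ and set $r_j = (2^{-j-1} + 2^{-1})r$, $B_j = B(x,r_j)$. Then for every $j \ge 1$, $\left( \frac{\mu(B_{j+1})}{\mu(2\sigma B)} \right)^{1/q} \le \sigma C_P 2^{j+4} \left( \frac{\mu(B_j)}{\mu(2\sigma B)} \right)^{1/p}$. -/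

import Mathlib

open MeasureTheory Metric Set Filter ENNReal

/-- `g` is an upper gradient of `u`: for every rectifiable curve (given by its
`1`-Lipschitz arclength parametrization `γ` on `[0, L]`) joining two points,
the variation of `u` between the endpoints is bounded by the line integral of
`g` along the curve. -/
def IsUpperGradient {X : Type*} [MetricSpace X] [MeasurableSpace X] [BorelSpace X]
    (g : X → ℝ≥0∞) (u : X → ℝ) : Prop :=
  ∀ (L : ℝ), 0 ≤ L → ∀ γ : ℝ → X, LipschitzOnWith 1 γ (Icc 0 L) →
    ENNReal.ofReal |u (γ 0) - u (γ L)| ≤ ∫⁻ t in Icc 0 L, g (γ t)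

/-- The `(q,p)`-Poincaré inequality with constant `CP` and dilation factor `σ`:
`(⨍_B |u - u_B|^q dμ)^(1/q) ≤ CP r (⨍_{σB} g^p dμ)^(1/p)` for every ball `B` of
radius `r`, every locally integrable `u` and every upper gradient `g` of `u`. -/
def PoincareQP {X : Type*} [MetricSpace X] [MeasurableSpace X] [BorelSpace X]
    (μ : Measure X) (p q CP σ : ℝ) : Prop :=
  ∀ (x : X) (r : ℝ), 0 < r → ∀ u : X → ℝ, LocallyIntegrable u μ →
    ∀ g : X → ℝ≥0∞, Measurable g → IsUpperGradient g u →
      (⨍⁻ y in ball x r, ENNReal.ofReal (|u y - ⨍ z in ball x r, u z ∂μ| ^ q) ∂μ) ^ (1 / q)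
        ≤ ENNReal.ofReal (CP * r) * (⨍⁻ y in ball x (σ * r), g y ^ p ∂μ) ^ (1 / p)


noncomputable def phi (rj δ s : ℝ) : ℝ := max 0 (min 1 ((rj - s) / δ))

lemma phi_nonneg (rj δ s : ℝ) : 0 ≤ phi rj δ s := le_max_left _ _

lemma phi_le_one (rj δ s : ℝ) : phi rj δ s ≤ 1 :=
  max_le zero_le_one (min_le_left _ _)

lemma phi_eq_one {rj δ s : ℝ} (hδ : 0 < δ) (hs : s ≤ rj - δ) : phi rj δ s = 1 := by
  have h1 : (1 : ℝ) ≤ (rj - s) / δ := (le_div_iff₀ hδ).2 (by linarith)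
  simp [phi, min_eq_left h1]

lemma phi_eq_zero {rj δ s : ℝ} (hδ : 0 < δ) (hs : rj ≤ s) : phi rj δ s = 0 := by
  have h1 : (rj - s) / δ ≤ 0 := div_nonpos_of_nonpos_of_nonneg (by linarith) hδ.le
  rw [phi, max_eq_left (le_trans (min_le_right _ _) h1)]

lemma phi_mid {rj δ s : ℝ} (hδ : 0 < δ) (h1 : rj - δ ≤ s) (h2 : s ≤ rj) :
    phi rj δ s = (rj - s) / δ := by
  have ha : (rj - s) / δ ≤ 1 := (div_le_one hδ).2 (by linarith)
  have hb : 0 ≤ (rj - s) / δ := div_nonneg (by linarith) hδ.le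
  rw [phi, min_eq_right ha, max_eq_right hb]

lemma phi_antitone {rj δ : ℝ} (hδ : 0 < δ) : Antitone (phi rj δ) := by
  intro a b hab
  refine max_le_max le_rfl (min_le_min le_rfl ?_)
  have h1 : rj - b ≤ rj - a := by linarith
  gcongr

lemma phi_continuous (rj δ : ℝ) : Continuous (phi rj δ) := by
  unfold phi; fun_prop

/-- Key curve estimate: the time a `1`-Lipschitz curve spends in `ball x rj` is at
least `δ` times the variation of the cutoff along the curve. -/
lemma curve_measure_est {X : Type*} [MetricSpace X]
    (x : X) {rj δ : ℝ} (hδ : 0 < δ) {L : ℝ} (hL : 0 ≤ L)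
    {γ : ℝ → X} (hγ : LipschitzOnWith 1 γ (Icc 0 L)) :
    ENNReal.ofReal (δ * |phi rj δ (dist x (γ 0)) - phi rj δ (dist x (γ L))|) ≤
      volume ((fun t => dist x (γ t)) ⁻¹' (Iio rj) ∩ Icc 0 L) := by
  set h : ℝ → ℝ := fun t => dist x (γ t) with hh
  have hlip : LipschitzOnWith 1 h (Icc 0 L) := by
    have := (LipschitzWith.dist_right x).comp_lipschitzOnWith hγ
    simpa [Function.comp_def] using this
  set m := min (h 0) (h L) with hm
  set Mx := max (h 0) (h L) with hMx
  have hmM : m ≤ Mx := min_le_max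
  have habs : |phi rj δ (h 0) - phi rj δ (h L)| = phi rj δ m - phi rj δ Mx := by
    rcases le_total (h 0) (h L) with hc | hc
    · rw [hm, hMx, min_eq_left hc, max_eq_right hc,
        abs_of_nonneg (by linarith [phi_antitone (rj := rj) hδ hc])]
    · rw [hm, hMx, min_eq_right hc, max_eq_left hc, abs_sub_comm,
        abs_of_nonneg (by linarith [phi_antitone (rj := rj) hδ hc])]
  rw [habs]
  set c := phi rj δ m - phi rj δ Mx with hc
  rcases le_or_gt c 0 with hc0 | hc0
  · rw [ENNReal.ofReal_of_nonpos (by nlinarith)]; exact zero_le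
  -- main case
  have hmrj : m < rj := by
    by_contra hcon
    rw [hc, phi_eq_zero hδ (not_lt.1 hcon)] at hc0
    nlinarith [phi_nonneg rj δ Mx]
  have hMrj : rj - δ < Mx := by
    by_contra hcon
    rw [hc, phi_eq_one hδ (not_lt.1 hcon)] at hc0
    nlinarith [phi_le_one rj δ m]
  set a := max m (rj - δ) with ha
  set b := min Mx rj with hb
  have hpa : phi rj δ a = phi rj δ m := by
    rcases le_total m (rj - δ) with hcase | hcase
    · rw [ha, max_eq_right hcase, phi_eq_one hδ le_rfl, phi_eq_one hδ hcase]
    · rw [ha, max_eq_left hcase]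
  have hpb : phi rj δ b = phi rj δ Mx := by
    rcases le_total Mx rj with hcase | hcase
    · rw [hb, min_eq_left hcase]
    · rw [hb, min_eq_right hcase, phi_eq_zero hδ le_rfl, phi_eq_zero hδ hcase]
  have ha1 : rj - δ ≤ a := le_max_right _ _
  have ha2 : a ≤ rj := max_le hmrj.le (by linarith)
  have hb1 : rj - δ ≤ b := le_min hMrj.le (by linarith)
  have hb2 : b ≤ rj := min_le_right _ _
  have hcab : c = (b - a) / δ := by
    rw [hc, ← hpa, ← hpb, phi_mid hδ ha1 ha2, phi_mid hδ hb1 hb2]; ring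
  have hba : b - a = δ * c := by rw [hcab]; field_simp
  have hab : a < b := by nlinarith
  -- intermediate value
  have hsub1 : Ioo a b ⊆ h '' (h ⁻¹' (Ioo a b) ∩ Icc 0 L) := by
    intro s hs
    have hmem : s ∈ uIcc (h 0) (h L) := by
      rw [Set.uIcc, ← hm, ← hMx]
      exact ⟨le_trans (le_max_left _ _) hs.1.le, le_trans hs.2.le (min_le_left _ _)⟩
    have hcont : ContinuousOn h (uIcc 0 L) := by
      rw [uIcc_of_le hL]; exact hlip.continuousOn
    obtain ⟨t, ht, hts⟩ := intermediate_value_uIcc hcont hmem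
    rw [uIcc_of_le hL] at ht
    exact ⟨t, ⟨by rw [Set.mem_preimage, hts]; exact hs, ht⟩, hts⟩
  have hsub2 : h ⁻¹' (Ioo a b) ∩ Icc 0 L ⊆ h ⁻¹' (Iio rj) ∩ Icc 0 L := by
    refine inter_subset_inter ?_ le_rfl
    intro t ht
    exact lt_of_lt_of_le ht.2 hb2
  calc ENNReal.ofReal (δ * c) = volume (Ioo a b) := by
        rw [Real.volume_Ioo, hba]
    _ = μH[1] (Ioo a b) := by rw [MeasureTheory.hausdorffMeasure_real]
    _ ≤ μH[1] (h '' (h ⁻¹' (Ioo a b) ∩ Icc 0 L)) := measure_mono hsub1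
    _ ≤ (1 : ℝ≥0∞) ^ (1 : ℝ) * μH[1] (h ⁻¹' (Ioo a b) ∩ Icc 0 L) := by
        simpa using (hlip.mono inter_subset_right).hausdorffMeasure_image_le zero_le_one
    _ = volume (h ⁻¹' (Ioo a b) ∩ Icc 0 L) := by
        rw [ENNReal.one_rpow, one_mul, MeasureTheory.hausdorffMeasure_real]
    _ ≤ volume (h ⁻¹' (Iio rj) ∩ Icc 0 L) := measure_mono hsub2

lemma isUpperGradient_cutoff {X : Type*} [MetricSpace X] [MeasurableSpace X] [BorelSpace X]
    (x : X) {rj δ : ℝ} (hδ : 0 < δ) :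
    IsUpperGradient ((ball x rj).indicator fun _ => ENNReal.ofReal δ⁻¹)
      (fun y => phi rj δ (dist x y)) := by
  intro L hL γ hγ
  have key := curve_measure_est x (rj := rj) hδ hL hγ
  have hlip : LipschitzOnWith 1 (fun t => dist x (γ t)) (Icc 0 L) := by
    simpa [Function.comp_def] using (LipschitzWith.dist_right x).comp_lipschitzOnWith hγ
  have hnull : NullMeasurableSet ((fun t => dist x (γ t)) ⁻¹' Iio rj)
      (volume.restrict (Icc 0 L)) :=
    (hlip.continuousOn.aemeasurable measurableSet_Icc).nullMeasurable measurableSet_Iio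
  have hind : ∀ t, ((ball x rj).indicator (fun _ => ENNReal.ofReal δ⁻¹)) (γ t)
      = ((fun t => dist x (γ t)) ⁻¹' Iio rj).indicator (fun _ => ENNReal.ofReal δ⁻¹) t := by
    intro t
    by_cases ht : γ t ∈ ball x rj
    · rw [indicator_of_mem ht, indicator_of_mem]
      simpa [mem_preimage, mem_Iio, dist_comm] using ht
    · rw [indicator_of_notMem ht, indicator_of_notMem]
      simpa [mem_preimage, mem_Iio, dist_comm] using ht
  show ENNReal.ofReal |phi rj δ (dist x (γ 0)) - phi rj δ (dist x (γ L))| ≤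
      ∫⁻ t in Icc 0 L, ((ball x rj).indicator fun _ => ENNReal.ofReal δ⁻¹) (γ t)
  calc ENNReal.ofReal |phi rj δ (dist x (γ 0)) - phi rj δ (dist x (γ L))|
      = ENNReal.ofReal δ⁻¹ *
        ENNReal.ofReal (δ * |phi rj δ (dist x (γ 0)) - phi rj δ (dist x (γ L))|) := by
        rw [← ENNReal.ofReal_mul (by positivity)]
        congr 1
        field_simp
    _ ≤ ENNReal.ofReal δ⁻¹ *
        volume ((fun t => dist x (γ t)) ⁻¹' (Iio rj) ∩ Icc 0 L) := mul_le_mul_right key _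
    _ = ∫⁻ t in Icc 0 L, ((ball x rj).indicator fun _ => ENNReal.ofReal δ⁻¹) (γ t) := by
        rw [lintegral_congr hind, lintegral_indicator₀ hnull, setLIntegral_const,
          Measure.restrict_apply₀ hnull]

/-- under the `(q,p)`-Poincaré inequality, with
`r_j = (2^{-j-1} + 2^{-1}) r` and `B_j = B(x, r_j)`, for every `j ≥ 1`
`(μ(B_{j+1})/μ(2σB))^{1/q} ≤ σ C_P 2^{j+4} (μ(B_j)/μ(2σB))^{1/p}`. -/
theorem key_iteration_inequality
    {X : Type*} [MetricSpace X] [MeasurableSpace X] [BorelSpace X]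
    (μ : Measure X) (hμ : ∀ (z : X) (ρ : ℝ), 0 < ρ → 0 < μ (ball z ρ) ∧ μ (ball z ρ) < ∞)
    (p q CP σ : ℝ) (hp : 1 ≤ p) (hpq : p < q) (hCP : 1 ≤ CP) (hσ : 1 ≤ σ)
    (hP : PoincareQP μ p q CP σ)
    (x : X) (r : ℝ) (hr : 0 < r)
    (rad : ℕ → ℝ) (hrad : ∀ j : ℕ, rad j = ((2 : ℝ) ^ (-(j : ℝ) - 1) + 2⁻¹) * r) :
    ∀ j : ℕ, 1 ≤ j →
      (μ (ball x (rad (j + 1))) / μ (ball x (2 * σ * r))) ^ (1 / q) ≤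
        ENNReal.ofReal (σ * CP * 2 ^ (j + 4)) *
          (μ (ball x (rad j)) / μ (ball x (2 * σ * r))) ^ (1 / p) := by
  intro j hj
  have hq1 : 1 ≤ q := hp.trans hpq.le
  have hq0 : 0 < q := lt_of_lt_of_le one_pos hq1
  have hp0 : 0 < p := lt_of_lt_of_le one_pos hp
  have hCP0 : 0 < CP := lt_of_lt_of_le one_pos hCP
  have hσ0 : 0 < σ := lt_of_lt_of_le one_pos hσ
  set rj := rad j with hrjdef
  set rj1 := rad (j + 1) with hrj1def
  have hrj : rj = ((2 : ℝ) ^ (-(j : ℝ) - 1) + 2⁻¹) * r := hrad j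
  have hrj1 : rj1 = ((2 : ℝ) ^ (-(j : ℝ) - 2) + 2⁻¹) * r := by
    rw [hrj1def, hrad]
    push_cast
    ring_nf
  set δ := rj - rj1 with hδdef
  have hδval : δ = (2 : ℝ) ^ (-(j : ℝ) - 2) * r := by
    rw [hδdef, hrj, hrj1]
    have h2 : (2 : ℝ) ^ (-(j : ℝ) - 1) = (2 : ℝ) ^ (-(j : ℝ) - 2) * 2 := by
      rw [show -(j : ℝ) - 1 = (-(j : ℝ) - 2) + 1 by ring, Real.rpow_add two_pos,
        Real.rpow_one]
    rw [h2]; ring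
  have hpow_pos : (0 : ℝ) < (2 : ℝ) ^ (-(j : ℝ) - 2) := Real.rpow_pos_of_pos two_pos _
  have hδ : 0 < δ := by rw [hδval]; positivity
  have hrj_le_r : rj ≤ r := by
    have h1 : (2 : ℝ) ^ (-(j : ℝ) - 1) ≤ (2 : ℝ) ^ (-1 : ℝ) := by
      apply Real.rpow_le_rpow_of_exponent_le one_le_two
      have : (0 : ℝ) ≤ (j : ℝ) := Nat.cast_nonneg j
      linarith
    rw [Real.rpow_neg_one] at h1
    rw [hrj]; nlinarith
  have hrj1_pos : 0 < rj1 := by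
    rw [hrj1]
    positivity
  have hrj_pos : 0 < rj := by
    rw [hrj]
    have := Real.rpow_pos_of_pos (two_pos (α := ℝ)) (-(j : ℝ) - 1)
    positivity
  set R := 2 * σ * r with hRdef
  have hR : 0 < R := by positivity
  have hr_le_R : r ≤ R := by nlinarith
  have hR_le_σR : R ≤ σ * R := by nlinarith
  set M := μ (ball x R) with hM
  have hM0 : M ≠ 0 := (hμ x R hR).1.ne'
  have hMtop : M ≠ ∞ := (hμ x R hR).2.ne
  set Aj := μ (ball x rj) with hAj
  set A1 := μ (ball x rj1) with hA1
  have hA1_le_M : A1 ≤ M := measure_mono (ball_subset_ball (by linarith))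
  have hAj_le_M : Aj ≤ M := measure_mono (ball_subset_ball (by linarith))
  rcases le_or_gt M (2 * Aj) with hcase | hcase
  · -- trivial case : μ(B_j) ≥ μ(2σB)/2
    have hL1 : (A1 / M) ^ (1 / q) ≤ 1 := by
      apply ENNReal.rpow_le_one _ (by positivity)
      calc A1 / M ≤ M / M := ENNReal.div_le_div hA1_le_M le_rfl
        _ = 1 := ENNReal.div_self hM0 hMtop
    have h2 : (2 : ℝ≥0∞)⁻¹ ≤ Aj / M := by
      rw [ENNReal.le_div_iff_mul_le (Or.inl hM0) (Or.inl hMtop)]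
      calc (2 : ℝ≥0∞)⁻¹ * M ≤ 2⁻¹ * (2 * Aj) := mul_le_mul_right hcase _
        _ = Aj := by rw [← mul_assoc, ENNReal.inv_mul_cancel two_ne_zero ofNat_ne_top, one_mul]
    have h3 : (2 : ℝ≥0∞)⁻¹ ≤ (Aj / M) ^ (1 / p) := by
      have ha : ((2 : ℝ≥0∞)⁻¹) ^ (1 : ℝ) ≤ ((2 : ℝ≥0∞)⁻¹) ^ (1 / p) := by
        apply ENNReal.rpow_le_rpow_of_exponent_ge (by simp [ENNReal.inv_le_one])
        rw [div_le_one hp0]; exact hp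
      calc (2 : ℝ≥0∞)⁻¹ = ((2 : ℝ≥0∞)⁻¹) ^ (1 : ℝ) := (ENNReal.rpow_one _).symm
        _ ≤ ((2 : ℝ≥0∞)⁻¹) ^ (1 / p) := ha
        _ ≤ (Aj / M) ^ (1 / p) := ENNReal.rpow_le_rpow h2 (by positivity)
    have h4 : (2 : ℝ≥0∞) ≤ ENNReal.ofReal (σ * CP * 2 ^ (j + 4)) := by
      rw [show (2 : ℝ≥0∞) = ENNReal.ofReal 2 by simp]
      apply ENNReal.ofReal_le_ofReal
      have hpow : (2 : ℝ) ≤ 2 ^ (j + 4) := by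
        calc (2 : ℝ) = 2 ^ 1 := (pow_one 2).symm
          _ ≤ 2 ^ (j + 4) := pow_le_pow_right₀ one_le_two (by omega)
      have h1 : (1 : ℝ) ≤ σ * CP := by nlinarith
      calc (2 : ℝ) = 1 * 2 := (one_mul 2).symm
        _ ≤ σ * CP * 2 ^ (j + 4) :=
          mul_le_mul h1 hpow (by norm_num) (by positivity)
    calc (A1 / M) ^ (1 / q) ≤ 1 := hL1
      _ = 2 * (2 : ℝ≥0∞)⁻¹ := by
          rw [ENNReal.mul_inv_cancel two_ne_zero ofNat_ne_top]
      _ ≤ ENNReal.ofReal (σ * CP * 2 ^ (j + 4)) * (Aj / M) ^ (1 / p) := mul_le_mul' h4 h3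
  · -- main case
    set u : X → ℝ := fun y => phi rj δ (dist x y) with hu
    have hu_cont : Continuous u := (phi_continuous rj δ).comp (continuous_const.dist continuous_id)
    haveI : IsLocallyFiniteMeasure μ :=
      ⟨fun z => ⟨ball z 1, ball_mem_nhds z one_pos, (hμ z 1 one_pos).2⟩⟩
    have hu_loc : LocallyIntegrable u μ := hu_cont.locallyIntegrable
    set g : X → ℝ≥0∞ := (ball x rj).indicator fun _ => ENNReal.ofReal δ⁻¹ with hg
    have hg_meas : Measurable g := measurable_const.indicator measurableSet_ball
    have hug : IsUpperGradient g u := isUpperGradient_cutoff x hδ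
    have P := hP x R hR u hu_loc g hg_meas hug
    have hu_nonneg : ∀ y, 0 ≤ u y := fun y => phi_nonneg _ _ _
    have hu_le_one : ∀ y, u y ≤ 1 := fun y => phi_le_one _ _ _
    have hu_one : ∀ y ∈ ball x rj1, u y = 1 := by
      intro y hy
      rw [mem_ball] at hy
      exact phi_eq_one hδ (by rw [dist_comm] at hy; linarith [hδdef])
    have hu_zero : ∀ y, y ∉ ball x rj → u y = 0 := by
      intro y hy
      rw [mem_ball, not_lt] at hy
      exact phi_eq_zero hδ (by rw [dist_comm] at hy; linarith)
    set ubar := ⨍ z in ball x R, u z ∂μ with hubar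
    have hMr : 0 < M.toReal := ENNReal.toReal_pos hM0 hMtop
    have hInt : IntegrableOn u (ball x R) μ := by
      refine Integrable.mono' (g := fun _ => (1 : ℝ))
        (integrableOn_const (hμ x R hR).2.ne)
        (hu_cont.aestronglyMeasurable.restrict) (ae_of_all _ fun y => ?_)
      rw [Real.norm_eq_abs, abs_of_nonneg (hu_nonneg y)]
      exact hu_le_one y
    have hIndInt : IntegrableOn ((ball x rj).indicator fun _ => (1 : ℝ)) (ball x R) μ :=
      (integrableOn_const (hμ x R hR).2.ne).indicator measurableSet_ball
    have hint_le : ∫ z in ball x R, u z ∂μ ≤ Aj.toReal := by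
      have h1 : ∫ z in ball x R, u z ∂μ ≤
          ∫ z in ball x R, ((ball x rj).indicator fun _ => (1 : ℝ)) z ∂μ := by
        refine setIntegral_mono_on hInt hIndInt measurableSet_ball fun y _ => ?_
        by_cases hy : y ∈ ball x rj
        · rw [indicator_of_mem hy]; exact hu_le_one y
        · rw [indicator_of_notMem hy, hu_zero y hy]
      have h2 : ∫ z in ball x R, ((ball x rj).indicator fun _ => (1 : ℝ)) z ∂μ
          = Aj.toReal := by
        rw [integral_indicator_const (1 : ℝ) measurableSet_ball, smul_eq_mul, mul_one,
          measureReal_def, Measure.restrict_apply measurableSet_ball,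
          inter_eq_self_of_subset_left (ball_subset_ball (by linarith))]
      linarith
    have hubar_nonneg : 0 ≤ ubar := by
      rw [hubar, setAverage_eq, smul_eq_mul]
      have : 0 ≤ ∫ z in ball x R, u z ∂μ := integral_nonneg hu_nonneg
      positivity
    have hubar_lt : ubar ≤ 2⁻¹ := by
      have h2Aj : 2 * Aj.toReal ≤ M.toReal := by
        have hfin : 2 * Aj ≠ ∞ := (hcase.trans (hμ x R hR).2).ne
        have := (ENNReal.toReal_le_toReal hfin hMtop).2 hcase.le
        rw [ENNReal.toReal_mul] at this
        simpa using this
      rw [hubar, setAverage_eq, smul_eq_mul]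
      rw [measureReal_def, ← hM, inv_mul_le_iff₀ hMr]
      linarith
    -- LHS lower bound
    have hLHS : ENNReal.ofReal 2⁻¹ * (A1 / M) ^ (1 / q) ≤
        (⨍⁻ y in ball x R, ENNReal.ofReal (|u y - ubar| ^ q) ∂μ) ^ (1 / q) := by
      have hpt : ∀ y, ((ball x rj1).indicator (fun _ => ENNReal.ofReal (2⁻¹ ^ q))) y ≤
          ENNReal.ofReal (|u y - ubar| ^ q) := by
        intro y
        by_cases hy : y ∈ ball x rj1
        · rw [indicator_of_mem hy]
          apply ENNReal.ofReal_le_ofReal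
          apply Real.rpow_le_rpow (by positivity) _ hq0.le
          rw [hu_one y hy, abs_of_nonneg (by linarith)]
          linarith
        · rw [indicator_of_notMem hy]; exact zero_le
      have h1 : ENNReal.ofReal (2⁻¹ ^ q) * A1 ≤
          ∫⁻ y in ball x R, ENNReal.ofReal (|u y - ubar| ^ q) ∂μ := by
        calc ENNReal.ofReal (2⁻¹ ^ q) * A1
            = ∫⁻ y in ball x R,
                ((ball x rj1).indicator (fun _ => ENNReal.ofReal (2⁻¹ ^ q))) y ∂μ := by
              rw [lintegral_indicator measurableSet_ball, setLIntegral_const,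
                Measure.restrict_apply measurableSet_ball,
                inter_eq_self_of_subset_left (ball_subset_ball (by linarith))]
          _ ≤ _ := lintegral_mono hpt
      have h2 : ENNReal.ofReal (2⁻¹ ^ q) * (A1 / M) ≤
          ⨍⁻ y in ball x R, ENNReal.ofReal (|u y - ubar| ^ q) ∂μ := by
        rw [setLAverage_eq, ← hM, ← mul_div_assoc]
        exact ENNReal.div_le_div h1 le_rfl
      calc ENNReal.ofReal 2⁻¹ * (A1 / M) ^ (1 / q)
          = (ENNReal.ofReal (2⁻¹ ^ q) * (A1 / M)) ^ (1 / q) := by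
            rw [ENNReal.mul_rpow_of_nonneg _ _ (by positivity),
              ← ENNReal.ofReal_rpow_of_pos (by norm_num), ← ENNReal.rpow_mul,
              mul_one_div_cancel hq0.ne', ENNReal.rpow_one]
        _ ≤ _ := ENNReal.rpow_le_rpow h2 (by positivity)
    -- RHS upper bound
    have hRHS : (⨍⁻ y in ball x (σ * R), g y ^ p ∂μ) ^ (1 / p) ≤
        ENNReal.ofReal δ⁻¹ * (Aj / M) ^ (1 / p) := by
      have hgp : ∀ y, g y ^ p =
          ((ball x rj).indicator fun _ => (ENNReal.ofReal δ⁻¹) ^ p) y := by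
        intro y
        by_cases hy : y ∈ ball x rj
        · rw [hg, indicator_of_mem hy, indicator_of_mem hy]
        · rw [hg, indicator_of_notMem hy, indicator_of_notMem hy,
            ENNReal.zero_rpow_of_pos hp0]
      have h1 : ∫⁻ y in ball x (σ * R), g y ^ p ∂μ = (ENNReal.ofReal δ⁻¹) ^ p * Aj := by
        rw [lintegral_congr hgp, lintegral_indicator measurableSet_ball, setLIntegral_const,
          Measure.restrict_apply measurableSet_ball,
          inter_eq_self_of_subset_left (ball_subset_ball (by nlinarith))]
      have h2 : ⨍⁻ y in ball x (σ * R), g y ^ p ∂μ ≤ (ENNReal.ofReal δ⁻¹) ^ p * (Aj / M) := by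
        rw [setLAverage_eq, h1, mul_div_assoc]
        refine mul_le_mul_right (ENNReal.div_le_div le_rfl ?_) _
        rw [hM]
        exact measure_mono (ball_subset_ball hR_le_σR)
      calc (⨍⁻ y in ball x (σ * R), g y ^ p ∂μ) ^ (1 / p)
          ≤ ((ENNReal.ofReal δ⁻¹) ^ p * (Aj / M)) ^ (1 / p) :=
            ENNReal.rpow_le_rpow h2 (by positivity)
        _ = ENNReal.ofReal δ⁻¹ * (Aj / M) ^ (1 / p) := by
            rw [ENNReal.mul_rpow_of_nonneg _ _ (by positivity), ← ENNReal.rpow_mul,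
              mul_one_div_cancel hp0.ne', ENNReal.rpow_one]
    -- combine
    have hmain : ENNReal.ofReal 2⁻¹ * (A1 / M) ^ (1 / q) ≤
        ENNReal.ofReal (CP * R) * (ENNReal.ofReal δ⁻¹ * (Aj / M) ^ (1 / p)) :=
      le_trans (le_trans hLHS P) (mul_le_mul_right hRHS _)
    have e0 : (2 : ℝ) ^ ((j : ℝ) + 4) = (2 : ℝ) ^ (j + 4 : ℕ) := by
      rw [← Real.rpow_natCast 2 (j + 4)]
      congr 1
      push_cast
      ring
    have e1 : (2 : ℝ) ^ (-(j : ℝ) - 2) * (2 : ℝ) ^ ((j : ℝ) + 4) = 4 := by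
      rw [← Real.rpow_add two_pos]
      have h2 : (-(j : ℝ) - 2) + ((j : ℝ) + 4) = ((2 : ℕ) : ℝ) := by push_cast; ring
      rw [h2, Real.rpow_natCast]
      norm_num
    have e2 : ((2 : ℝ) ^ (-(j : ℝ) - 2))⁻¹ * 4 = (2 : ℝ) ^ (j + 4 : ℕ) := by
      have h4 : ((2 : ℝ) ^ (-(j : ℝ) - 2))⁻¹ *
          ((2 : ℝ) ^ (-(j : ℝ) - 2) * (2 : ℝ) ^ ((j : ℝ) + 4)) = (2 : ℝ) ^ ((j : ℝ) + 4) := by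
        rw [← mul_assoc, inv_mul_cancel₀ hpow_pos.ne', one_mul]
      rw [← e0, ← h4, e1]
    have hconst : 2 * (CP * R * δ⁻¹) = σ * CP * 2 ^ (j + 4) := by
      rw [hδval, hRdef, mul_inv, ← e2]
      have hrr : r * r⁻¹ = 1 := mul_inv_cancel₀ hr.ne'
      generalize ((2 : ℝ) ^ (-(j : ℝ) - 2))⁻¹ = w
      linear_combination (4 * CP * σ * w) * hrr
    calc (A1 / M) ^ (1 / q)
        = ENNReal.ofReal 2 * (ENNReal.ofReal 2⁻¹ * (A1 / M) ^ (1 / q)) := by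
          rw [← mul_assoc, ← ENNReal.ofReal_mul (by norm_num)]
          norm_num
      _ ≤ ENNReal.ofReal 2 *
          (ENNReal.ofReal (CP * R) * (ENNReal.ofReal δ⁻¹ * (Aj / M) ^ (1 / p))) :=
          mul_le_mul_right hmain _
      _ = ENNReal.ofReal (σ * CP * 2 ^ (j + 4)) * (Aj / M) ^ (1 / p) := by
          rw [← mul_assoc, ← mul_assoc, ← ENNReal.ofReal_mul (by norm_num),
            ← ENNReal.ofReal_mul (by positivity), mul_assoc (2 : ℝ), hconst]
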